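/- Let V = (ZMod 2)^n, let f : V → ℂ, let D_f be the diagonal matrix with (D_f)_{x,x} = f(x), and let H be the 2^n × 2^n Hadamard matrix with entries H_{x,y} = 2^{−n/2}(−1)^{x·y}. Then for all y, w ∈ V, the (y,w) entry of H·D_f·H equals f̂(y + w), where f̂(s) = 2^{−n} Σ_{x∈V} f(x)(−1)^{x·s}. In particular, when f takes values in {−1,1}, the probability of measuring outcome y when the circuit H·D_f·H is applied to the basis state |w⟩ is f̂(y + w)². -/

import Mathlib

open Matrix
open scoped ComplexOrder

/-- The real sign `(-1)^a` of an element `a : ZMod 2`. -/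
def signOf (a : ZMod 2) : ℝ := if a = 0 then 1 else -1

/-- Fourier coefficient of `f : (Fin n → ZMod 2) → ℂ` at `s`. -/
noncomputable def booleanFourierCoeff {n : ℕ} (f : (Fin n → ZMod 2) → ℂ) (s : Fin n → ZMod 2) : ℂ :=
  ((2 : ℂ) ^ n)⁻¹ * ∑ x, f x * (signOf (x ⬝ᵥ s) : ℝ)

lemma signOf_add (a b : ZMod 2) : signOf (a + b) = signOf a * signOf b := by
  have h01 : ∀ c : ZMod 2, c = 0 ∨ c = 1 := by decide
  rcases h01 a with rfl | rfl <;> rcases h01 b with rfl | rfl <;>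
    simp [signOf, CharTwo.add_self_eq_zero]

lemma signOf_dotProduct_add {n : ℕ} (x y w : Fin n → ZMod 2) :
    signOf (x ⬝ᵥ (y + w)) = signOf (y ⬝ᵥ x) * signOf (x ⬝ᵥ w) := by
  rw [dotProduct_add, dotProduct_comm x y, signOf_add]

lemma scaled_sign_mul_diagonal_mul_scaled_sign_apply {n : ℕ} (c : ℝ)
    {H : Matrix (Fin n → ZMod 2) (Fin n → ZMod 2) ℂ}
    (hH : H = of fun x y => ((c * signOf (x ⬝ᵥ y) : ℝ) : ℂ))
    (f : (Fin n → ZMod 2) → ℂ) (y w : Fin n → ZMod 2) :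
    (H * diagonal f * H) y w = ((c ^ 2 : ℝ) : ℂ) * ∑ x, f x * (signOf (x ⬝ᵥ (y + w)) : ℝ) := by
  subst hH
  rw [mul_apply]
  simp only [mul_diagonal, of_apply, Finset.mul_sum, signOf_dotProduct_add]
  refine Finset.sum_congr rfl fun x _ => ?_
  push_cast
  ring

lemma booleanFourierCoeff_im_eq_zero {n : ℕ} {f : (Fin n → ZMod 2) → ℂ}
    (hf : ∀ x, (f x).im = 0) (s : Fin n → ZMod 2) : (booleanFourierCoeff f s).im = 0 := by
  have hcast : ((2 : ℂ) ^ n)⁻¹ = (((2 : ℝ) ^ n)⁻¹ : ℝ) := by push_cast; ring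
  rw [booleanFourierCoeff, hcast, Complex.im_ofReal_mul, Complex.im_sum]
  simp [hf]

theorem half_bqp_fourier_sampling (n : ℕ) (f : (Fin n → ZMod 2) → ℂ)
    (H : Matrix (Fin n → ZMod 2) (Fin n → ZMod 2) ℂ)
    (hH : H = Matrix.of fun x y => (((Real.sqrt (2 ^ n))⁻¹ * signOf (x ⬝ᵥ y) : ℝ) : ℂ))
    (Df : Matrix (Fin n → ZMod 2) (Fin n → ZMod 2) ℂ)
    (hDf : Df = Matrix.diagonal f) (y w : Fin n → ZMod 2) :
    (H * Df * H) y w = booleanFourierCoeff f (y + w) ∧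
      ((∀ x, f x = 1 ∨ f x = -1) →
        ‖(H * Df * H) y w‖ ^ 2 = (booleanFourierCoeff f (y + w)).re ^ 2) := by
  have hentry : (H * Df * H) y w = booleanFourierCoeff f (y + w) := by
    have hc : ((Real.sqrt (2 ^ n))⁻¹ ^ 2 : ℝ) = ((2 : ℝ) ^ n)⁻¹ := by
      rw [inv_pow, Real.sq_sqrt (by positivity)]
    rw [hDf, scaled_sign_mul_diagonal_mul_scaled_sign_apply _ hH, hc, booleanFourierCoeff]
    push_cast
    ring
  refine ⟨hentry, fun hf => ?_⟩
  have hf_real : ∀ x, (f x).im = 0 := fun x => by rcases hf x with h | h <;> simp [h]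
  rw [hentry, ← Complex.abs_re_eq_norm.mpr (booleanFourierCoeff_im_eq_zero hf_real _), sq_abs]
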